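/- With the notation of the block Gram matrix S₁ = [[0,0,1],[0,S,0],[1,0,0]], let v ∈ ℝ^ℓ with Q(v) = (1/2)vᵀSv = 1 and define J_v = [[0,0,−1],[0, I − v vᵀ S, 0],[−1,0,0]]. Then J_vᵀ S₁ J_v = S₁, and for z with Q(z) ≠ 0, J_v·(−Q(z), z, 1)ᵀ = Q(z)·(−Q(w), w, 1)ᵀ where w = (z − ⟨v,z⟩v)/Q(z) and ⟨v,z⟩ = vᵀSz; in particular the factor of automorphy is j(J_v; z) = Q(z). -/
import Mathlib


open Matrix Finset

section
variable (l : ℕ) (S : Matrix (Fin l) (Fin l) ℂ)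

/-- `Q(z) = (1/2) zᵀ S z`. -/
noncomputable def Qform (z : Fin l → ℂ) : ℂ := (1 / 2 : ℂ) * (z ⬝ᵥ S.mulVec z)

/-- The bilinear form `⟨x,y⟩ = xᵀ S y`. -/
noncomputable def Bform (x y : Fin l → ℂ) : ℂ := x ⬝ᵥ S.mulVec y

/-- Index type for blocks of sizes `1, ℓ, 1`. -/
abbrev Idx := Fin 1 ⊕ (Fin l ⊕ Fin 1)

/-- The block Gram matrix `S₁ = [[0,0,1],[0,S,0],[1,0,0]]`. -/
noncomputable def S1 : Matrix (Idx l) (Idx l) ℂ :=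
  Matrix.of fun i j =>
    match i, j with
    | Sum.inl _, Sum.inr (Sum.inr _) => 1
    | Sum.inr (Sum.inr _), Sum.inl _ => 1
    | Sum.inr (Sum.inl a), Sum.inr (Sum.inl b) => S a b
    | _, _ => 0

/-- The inversion matrix `J_v = [[0,0,-1],[0, I - v vᵀ S, 0],[-1,0,0]]`. -/
noncomputable def Jv (v : Fin l → ℂ) : Matrix (Idx l) (Idx l) ℂ :=
  Matrix.of fun i j =>
    match i, j with
    | Sum.inl _, Sum.inr (Sum.inr _) => -1
    | Sum.inr (Sum.inr _), Sum.inl _ => -1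
    | Sum.inr (Sum.inl a), Sum.inr (Sum.inl a') =>
        (if a = a' then 1 else 0) - v a * ∑ c, v c * S c a'
    | _, _ => 0

/-- The vector `(-Q(z), z, 1)ᵀ`. -/
noncomputable def modVec (z : Fin l → ℂ) : Idx l → ℂ := fun i =>
  match i with
  | Sum.inl _ => -Qform l S z
  | Sum.inr (Sum.inl a) => z a
  | Sum.inr (Sum.inr _) => 1

end


section Aux
variable {l : ℕ} {S : Matrix (Fin l) (Fin l) ℂ}

lemma Bform_comm (hS : S.IsSymm) (x y : Fin l → ℂ) :
    x ⬝ᵥ S.mulVec y = y ⬝ᵥ S.mulVec x := by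
  rw [dotProduct_mulVec, ← Matrix.mulVec_transpose, hS.eq, dotProduct_comm]

lemma Qform_sub_smul (hS : S.IsSymm) (v z : Fin l → ℂ) (t : ℂ) :
    Qform l S (z - t • v) = Qform l S z - t * (v ⬝ᵥ S.mulVec z) + t^2 * Qform l S v := by
  simp only [Qform, Matrix.mulVec_sub, Matrix.mulVec_smul, dotProduct_sub, sub_dotProduct,
    dotProduct_smul, smul_dotProduct, smul_eq_mul]
  rw [Bform_comm hS z v]
  ring

lemma Qform_smul (c : ℂ) (z : Fin l → ℂ) :
    Qform l S (c • z) = c^2 * Qform l S z := by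
  simp only [Qform, Matrix.mulVec_smul, dotProduct_smul, smul_dotProduct, smul_eq_mul]
  ring

lemma midmid (v u : Fin l → ℂ)
    (hu : ∀ x, u x = ∑ c, v c * S c x)
    (hsym : ∀ a b, S a b = S b a)
    (huv : ∑ x, v x * u x = 2)
    (a b : Fin l) :
    ∑ x, (∑ x1, ((if x1 = a then 1 else 0) - v x1 * u a) * S x1 x) *
      ((if x = b then 1 else 0) - v x * u b) = S a b := by
  have hinner : ∀ x, (∑ x1, ((if x1 = a then 1 else 0) - v x1 * u a) * S x1 x)
      = S a x - u a * u x := by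
    intro x
    simp only [sub_mul, Finset.sum_sub_distrib, ite_mul, one_mul, zero_mul,
      Finset.sum_ite_eq', Finset.mem_univ, if_true]
    congr 1
    rw [hu x, Finset.mul_sum]
    exact Finset.sum_congr rfl fun c _ => by ring
  simp only [hinner]
  simp only [sub_mul, mul_sub, mul_ite, mul_one, mul_zero, Finset.sum_sub_distrib,
    Finset.sum_ite_eq', Finset.mem_univ, if_true]
  have h1 : ∑ x, S a x * (v x * u b) = u a * u b := by
    rw [hu a, Finset.sum_mul]
    exact Finset.sum_congr rfl fun x _ => by rw [hsym a x]; ring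
  have h2 : ∑ x, u a * u x * (v x * u b) = 2 * (u a * u b) := by
    calc ∑ x, u a * u x * (v x * u b) = (∑ x, v x * u x) * (u a * u b) := by
          rw [Finset.sum_mul]; exact Finset.sum_congr rfl fun x _ => by ring
      _ = 2 * (u a * u b) := by rw [huv]
  rw [h1, h2]
  ring

end Aux

/-- For `v` with `Q(v) = 1`, the inversion `J_v` is orthogonal for `S₁`, and for `Q(z) ≠ 0`
its Möbius action sends `z` to `w = (z - ⟨v,z⟩v)/Q(z)` with factor of automorphy
`j(J_v;z) = Q(z)`: `J_v·(-Q(z),z,1)ᵀ = Q(z)·(-Q(w),w,1)ᵀ`. -/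
theorem inversion_orthogonal_and_action (l : ℕ) (S : Matrix (Fin l) (Fin l) ℂ)
    (hS : S.IsSymm) (v : Fin l → ℂ) (hv : Qform l S v = 1)
    (z : Fin l → ℂ) (hz : Qform l S z ≠ 0) :
    (Jv l S v)ᵀ * S1 l S * Jv l S v = S1 l S ∧
      (Jv l S v).mulVec (modVec l S z) =
        Qform l S z • modVec l S ((Qform l S z)⁻¹ • (z - Bform l S v z • v)) := by
  have hsym : ∀ a b, S a b = S b a := fun a b => hS.apply b a
  have hv2 : v ⬝ᵥ S.mulVec v = 2 := by
    have h1 : (1/2 : ℂ) * (v ⬝ᵥ S.mulVec v) = 1 := hv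
    field_simp at h1
    linear_combination h1
  set u : Fin l → ℂ := fun a => ∑ c, v c * S c a with hu
  have huv : ∑ x, v x * u x = 2 := by
    rw [← hv2]
    simp only [hu, dotProduct, Matrix.mulVec, dotProduct, Finset.mul_sum]
    rw [Finset.sum_comm]
    exact Finset.sum_congr rfl fun c _ => Finset.sum_congr rfl fun x _ => by ring
  constructor
  · ext i j
    rcases i with i | a | i <;> rcases j with j | b | j <;>
      simp [Matrix.mul_apply, Jv, S1, Fintype.sum_sum_type, Fin.sum_univ_one]
    exact midmid v u (fun _ => rfl) hsym huv a b
  · have hQw : Qform l S (z - Bform l S v z • v) = Qform l S z := by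
      rw [Qform_sub_smul hS, hv, Bform]
      ring
    ext i
    rcases i with i | a | i <;>
      simp [Matrix.mulVec, Jv, modVec, Fintype.sum_sum_type, Fin.sum_univ_one, dotProduct,
        Qform_smul, hQw]
    · field_simp
    · have ha : (∑ x, ((if a = x then 1 else 0) - v a * u x) * z x)
          = z a - v a * Bform l S v z := by
        simp only [sub_mul, Finset.sum_sub_distrib, ite_mul, one_mul, zero_mul,
          Finset.sum_ite_eq, Finset.mem_univ, if_true]
        congr 1
        rw [Bform, dotProduct, Finset.mul_sum]
        simp only [Matrix.mulVec, dotProduct, hu, Finset.mul_sum]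
        rw [Finset.sum_comm]
        refine Finset.sum_congr rfl fun c _ => ?_
        rw [Finset.sum_mul]
        exact Finset.sum_congr rfl fun x _ => by ring
      rw [ha]
      field_simp
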